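/- Deterministic synchronous form of the paper's Theorem 1 (convergence of QRM-SG iterates under saddle-point selections): assume 0 < γ < 1. Let q* be a Q-function pair and (π*(s), ρ*(s)) a strategy pair for each state s such that (π*(s), ρ*(s)) is a saddle point of the stage game (q*₁(s,·,·), q*₂(s,·,·)) for every s, and such that the operator F applied to q* with the selection (π*, ρ*) satisfies F q* = q*. Let (α_t) satisfy 0 < α_t < 1 for all t, ∑_{t=0}^{∞} α_t = ∞, and ∑_{t=0}^{∞} α_t² < ∞. Define iterates by q^{t+1} = (1 − α_t)·q^t + α_t·F_t q^t, where F_t is the operator applied to q^t with any selection (π^t(s), ρ^t(s)) that is, at every state s, a saddle point of the stage game (q^t₁(s,·,·), q^t₂(s,·,·)). Then for any initial Q-function pair q⁰, the sequence q^t converges to q* in the sup norm. -/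
import Mathlib


open Filter

/-- A mixed strategy on a finite nonempty action set: nonnegative weights summing to 1. -/
def IsMixed {A : Type*} [Fintype A] (π : A → ℝ) : Prop :=
  (∀ a, 0 ≤ π a) ∧ ∑ a, π a = 1

/-- Expected payoff of the payoff function `q` under mixed strategies `π` and `ρ`. -/
def expPay {A B : Type*} [Fintype A] [Fintype B]
    (π : A → ℝ) (ρ : B → ℝ) (q : A → B → ℝ) : ℝ :=
  ∑ a, ∑ b, π a * ρ b * q a b

/-- `(π̃, ρ̃)` is a saddle point of the two-player stage game `(q₁, q₂)`. -/
def IsSaddle {A B : Type*} [Fintype A] [Fintype B]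
    (q₁ q₂ : A → B → ℝ) (πt : A → ℝ) (ρt : B → ℝ) : Prop :=
  IsMixed πt ∧ IsMixed ρt ∧
    (∀ π, IsMixed π → expPay π ρt q₁ ≤ expPay πt ρt q₁) ∧
    (∀ ρ, IsMixed ρ → expPay πt ρ q₂ ≤ expPay πt ρt q₂) ∧
    (∀ ρ, IsMixed ρ → expPay πt ρt q₁ ≤ expPay πt ρ q₁) ∧
    (∀ π, IsMixed π → expPay πt ρt q₂ ≤ expPay π ρt q₂)

/-- One component of the Nash Bellman operator: given a per-state strategy
selection `(π, ρ)`, `(F q)(s,a,b) = r(s,a,b) + γ·E_{π(s'),ρ(s')}[q(s',·,·)]`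
with `s' = τ(s,a,b)`. -/
noncomputable def bellman {S A B : Type*} [Fintype A] [Fintype B]
    (r : S → A → B → ℝ) (τ : S → A → B → S) (γ : ℝ)
    (π : S → A → ℝ) (ρ : S → B → ℝ) (q : S → A → B → ℝ) : S → A → B → ℝ :=
  fun s a b => r s a b + γ * expPay (π (τ s a b)) (ρ (τ s a b)) (q (τ s a b))

/-- Sup-norm distance between Q-function pairs:
`max_i max_{(s,a,b)} |q_i(s,a,b) − q'_i(s,a,b)|`. -/
noncomputable def qDist {S A B : Type*}
    [Fintype S] [Nonempty S] [Fintype A] [Nonempty A] [Fintype B] [Nonempty B]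
    (q₁ q₂ q₁' q₂' : S → A → B → ℝ) : ℝ :=
  max
    (Finset.univ.sup' Finset.univ_nonempty
      (fun x : S × A × B => |q₁ x.1 x.2.1 x.2.2 - q₁' x.1 x.2.1 x.2.2|))
    (Finset.univ.sup' Finset.univ_nonempty
      (fun x : S × A × B => |q₂ x.1 x.2.1 x.2.2 - q₂' x.1 x.2.1 x.2.2|))

lemma expPay_sub {A B : Type*} [Fintype A] [Fintype B]
    (π : A → ℝ) (ρ : B → ℝ) (q q' : A → B → ℝ) :
    expPay π ρ q - expPay π ρ q' = expPay π ρ (fun a b => q a b - q' a b) := by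
  simp [expPay, ← Finset.sum_sub_distrib, mul_sub]
lemma abs_expPay_le {A B : Type*} [Fintype A] [Fintype B] {π : A → ℝ} {ρ : B → ℝ}
    (hπ : IsMixed π) (hρ : IsMixed ρ) (f : A → B → ℝ) (M : ℝ)
    (hM : ∀ a b, |f a b| ≤ M) : |expPay π ρ f| ≤ M := by
  have h1 : |expPay π ρ f| ≤ ∑ a, ∑ b, π a * ρ b * M := by
    refine le_trans (Finset.abs_sum_le_sum_abs _ _) ?_
    refine Finset.sum_le_sum fun a _ => ?_
    refine le_trans (Finset.abs_sum_le_sum_abs _ _) ?_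
    refine Finset.sum_le_sum fun b _ => ?_
    rw [abs_mul, abs_of_nonneg (mul_nonneg (hπ.1 a) (hρ.1 b))]
    exact mul_le_mul_of_nonneg_left (hM a b) (mul_nonneg (hπ.1 a) (hρ.1 b))
  have h2 : ∑ a, ∑ b, π a * ρ b * M = M := by
    simp_rw [mul_assoc, ← Finset.mul_sum, ← Finset.sum_mul, hρ.2, hπ.2, one_mul]
  linarith

lemma saddle_val_diff₁ {A B : Type*} [Fintype A] [Fintype B]
    {q₁ q₂ q₁' q₂' : A → B → ℝ} {πt π' : A → ℝ} {ρt ρ' : B → ℝ}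
    (h : IsSaddle q₁ q₂ πt ρt) (h' : IsSaddle q₁' q₂' π' ρ')
    (M : ℝ) (hM : ∀ a b, |q₁ a b - q₁' a b| ≤ M) :
    |expPay πt ρt q₁ - expPay π' ρ' q₁'| ≤ M := by
  obtain ⟨hπt, hρt, hmax, -, hmin, -⟩ := h
  obtain ⟨hπ', hρ', hmax', -, hmin', -⟩ := h'
  rw [abs_le]
  constructor
  · have h1 : expPay π' ρ' q₁' ≤ expPay π' ρt q₁' := hmin' ρt hρt
    have h2 : expPay π' ρt q₁ ≤ expPay πt ρt q₁ := hmax π' hπ'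
    have h3 : |expPay π' ρt q₁ - expPay π' ρt q₁'| ≤ M := by
      rw [expPay_sub]; exact abs_expPay_le hπ' hρt _ M hM
    have := abs_le.mp h3
    linarith [this.1]
  · have h1 : expPay πt ρt q₁ ≤ expPay πt ρ' q₁ := hmin ρ' hρ'
    have h2 : expPay πt ρ' q₁' ≤ expPay π' ρ' q₁' := hmax' πt hπt
    have h3 : |expPay πt ρ' q₁ - expPay πt ρ' q₁'| ≤ M := by
      rw [expPay_sub]; exact abs_expPay_le hπt hρ' _ M hM
    have := abs_le.mp h3
    linarith [this.2]

lemma saddle_val_diff₂ {A B : Type*} [Fintype A] [Fintype B]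
    {q₁ q₂ q₁' q₂' : A → B → ℝ} {πt π' : A → ℝ} {ρt ρ' : B → ℝ}
    (h : IsSaddle q₁ q₂ πt ρt) (h' : IsSaddle q₁' q₂' π' ρ')
    (M : ℝ) (hM : ∀ a b, |q₂ a b - q₂' a b| ≤ M) :
    |expPay πt ρt q₂ - expPay π' ρ' q₂'| ≤ M := by
  obtain ⟨hπt, hρt, -, hmax, -, hmin⟩ := h
  obtain ⟨hπ', hρ', -, hmax', -, hmin'⟩ := h'
  rw [abs_le]
  constructor
  · have h1 : expPay π' ρ' q₂' ≤ expPay πt ρ' q₂' := hmin' πt hπt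
    have h2 : expPay πt ρ' q₂ ≤ expPay πt ρt q₂ := hmax ρ' hρ'
    have h3 : |expPay πt ρ' q₂ - expPay πt ρ' q₂'| ≤ M := by
      rw [expPay_sub]; exact abs_expPay_le hπt hρ' _ M hM
    have := abs_le.mp h3
    linarith [this.1]
  · have h1 : expPay πt ρt q₂ ≤ expPay π' ρt q₂ := hmin π' hπ'
    have h2 : expPay π' ρt q₂' ≤ expPay π' ρ' q₂' := hmax' ρt hρt
    have h3 : |expPay π' ρt q₂ - expPay π' ρt q₂'| ≤ M := by
      rw [expPay_sub]; exact abs_expPay_le hπ' hρt _ M hM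
    have := abs_le.mp h3
    linarith [this.2]

/-- Deterministic synchronous form of the paper's Theorem 1: the QRM-SG
iterates, updated with the Nash Bellman operator under saddle-point
selections and Robbins–Monro step sizes, converge in the sup norm to the
fixed point `q*` whose selection is a saddle point at every state. -/
theorem qrmsg_convergence_saddle {S A B : Type*}
    [Fintype S] [Nonempty S] [Fintype A] [Nonempty A] [Fintype B] [Nonempty B]
    (r₁ r₂ : S → A → B → ℝ) (τ : S → A → B → S)
    (γ : ℝ) (hγ0 : 0 < γ) (hγ1 : γ < 1)
    (q₁s q₂s : S → A → B → ℝ) (πs : S → A → ℝ) (ρs : S → B → ℝ)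
    (hstar : ∀ s, IsSaddle (q₁s s) (q₂s s) (πs s) (ρs s))
    (hfix₁ : bellman r₁ τ γ πs ρs q₁s = q₁s)
    (hfix₂ : bellman r₂ τ γ πs ρs q₂s = q₂s)
    (α : ℕ → ℝ) (hα0 : ∀ t, 0 < α t) (hα1 : ∀ t, α t < 1)
    (hαdiv : Tendsto (fun n => ∑ t ∈ Finset.range n, α t) atTop atTop)
    (hαsq : Summable fun t => (α t) ^ 2)
    (q₁ q₂ : ℕ → S → A → B → ℝ)
    (π : ℕ → S → A → ℝ) (ρ : ℕ → S → B → ℝ)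
    (hsel : ∀ t s, IsSaddle (q₁ t s) (q₂ t s) (π t s) (ρ t s))
    (hrec₁ : ∀ t s a b, q₁ (t + 1) s a b =
      (1 - α t) * q₁ t s a b + α t * bellman r₁ τ γ (π t) (ρ t) (q₁ t) s a b)
    (hrec₂ : ∀ t s a b, q₂ (t + 1) s a b =
      (1 - α t) * q₂ t s a b + α t * bellman r₂ τ γ (π t) (ρ t) (q₂ t) s a b) :
    Tendsto (fun t => qDist (q₁ t) (q₂ t) q₁s q₂s) atTop (nhds 0) := by
  classical
  set d : ℕ → ℝ := fun t => qDist (q₁ t) (q₂ t) q₁s q₂s with hd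
  have hle₁ : ∀ t s a b, |q₁ t s a b - q₁s s a b| ≤ d t := fun t s a b =>
    le_trans (Finset.le_sup'
      (fun x : S × A × B => |q₁ t x.1 x.2.1 x.2.2 - q₁s x.1 x.2.1 x.2.2|)
      (Finset.mem_univ (s, a, b))) (le_max_left _ _)
  have hle₂ : ∀ t s a b, |q₂ t s a b - q₂s s a b| ≤ d t := fun t s a b =>
    le_trans (Finset.le_sup'
      (fun x : S × A × B => |q₂ t x.1 x.2.1 x.2.2 - q₂s x.1 x.2.1 x.2.2|)
      (Finset.mem_univ (s, a, b))) (le_max_right _ _)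
  have key₁ : ∀ t s a b,
      |q₁ (t + 1) s a b - q₁s s a b| ≤ (1 - α t * (1 - γ)) * d t := by
    intro t s a b
    have hfixp : q₁s s a b =
        r₁ s a b + γ * expPay (πs (τ s a b)) (ρs (τ s a b)) (q₁s (τ s a b)) := by
      conv_lhs => rw [← hfix₁]
      simp only [bellman]
    have hE : |expPay (π t (τ s a b)) (ρ t (τ s a b)) (q₁ t (τ s a b)) -
        expPay (πs (τ s a b)) (ρs (τ s a b)) (q₁s (τ s a b))| ≤ d t :=
      saddle_val_diff₁ (hsel t (τ s a b)) (hstar (τ s a b)) (d t)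
        (fun a' b' => hle₁ t (τ s a b) a' b')
    have hrew : q₁ (t + 1) s a b - q₁s s a b
        = (1 - α t) * (q₁ t s a b - q₁s s a b)
          + (α t * γ) * (expPay (π t (τ s a b)) (ρ t (τ s a b)) (q₁ t (τ s a b)) -
              expPay (πs (τ s a b)) (ρs (τ s a b)) (q₁s (τ s a b))) := by
      rw [hrec₁, hfixp]
      simp only [bellman]
      ring
    rw [hrew]
    have hα1' : (0:ℝ) ≤ 1 - α t := by linarith [hα1 t]
    have hαγ : (0:ℝ) ≤ α t * γ := mul_nonneg (hα0 t).le hγ0.le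
    calc |(1 - α t) * (q₁ t s a b - q₁s s a b) + (α t * γ) * _|
        ≤ |(1 - α t) * (q₁ t s a b - q₁s s a b)| + |(α t * γ) * _| := abs_add_le _ _
      _ ≤ (1 - α t) * d t + (α t * γ) * d t := by
          refine add_le_add ?_ ?_
          · rw [abs_mul, abs_of_nonneg hα1']
            exact mul_le_mul_of_nonneg_left (hle₁ t s a b) hα1'
          · rw [abs_mul, abs_of_nonneg hαγ]
            exact mul_le_mul_of_nonneg_left hE hαγ
      _ = (1 - α t * (1 - γ)) * d t := by ring
  have key₂ : ∀ t s a b,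
      |q₂ (t + 1) s a b - q₂s s a b| ≤ (1 - α t * (1 - γ)) * d t := by
    intro t s a b
    have hfixp : q₂s s a b =
        r₂ s a b + γ * expPay (πs (τ s a b)) (ρs (τ s a b)) (q₂s (τ s a b)) := by
      conv_lhs => rw [← hfix₂]
      simp only [bellman]
    have hE : |expPay (π t (τ s a b)) (ρ t (τ s a b)) (q₂ t (τ s a b)) -
        expPay (πs (τ s a b)) (ρs (τ s a b)) (q₂s (τ s a b))| ≤ d t :=
      saddle_val_diff₂ (hsel t (τ s a b)) (hstar (τ s a b)) (d t)
        (fun a' b' => hle₂ t (τ s a b) a' b')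
    have hrew : q₂ (t + 1) s a b - q₂s s a b
        = (1 - α t) * (q₂ t s a b - q₂s s a b)
          + (α t * γ) * (expPay (π t (τ s a b)) (ρ t (τ s a b)) (q₂ t (τ s a b)) -
              expPay (πs (τ s a b)) (ρs (τ s a b)) (q₂s (τ s a b))) := by
      rw [hrec₂, hfixp]
      simp only [bellman]
      ring
    rw [hrew]
    have hα1' : (0:ℝ) ≤ 1 - α t := by linarith [hα1 t]
    have hαγ : (0:ℝ) ≤ α t * γ := mul_nonneg (hα0 t).le hγ0.le
    calc |(1 - α t) * (q₂ t s a b - q₂s s a b) + (α t * γ) * _|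
        ≤ |(1 - α t) * (q₂ t s a b - q₂s s a b)| + |(α t * γ) * _| := abs_add_le _ _
      _ ≤ (1 - α t) * d t + (α t * γ) * d t := by
          refine add_le_add ?_ ?_
          · rw [abs_mul, abs_of_nonneg hα1']
            exact mul_le_mul_of_nonneg_left (hle₂ t s a b) hα1'
          · rw [abs_mul, abs_of_nonneg hαγ]
            exact mul_le_mul_of_nonneg_left hE hαγ
      _ = (1 - α t * (1 - γ)) * d t := by ring
  have hcontr : ∀ t, d (t + 1) ≤ (1 - α t * (1 - γ)) * d t := by
    intro t
    refine max_le (Finset.sup'_le _ _ ?_) (Finset.sup'_le _ _ ?_)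
    · rintro ⟨s, a, b⟩ -
      exact key₁ t s a b
    · rintro ⟨s, a, b⟩ -
      exact key₂ t s a b
  set c : ℕ → ℝ := fun t => 1 - α t * (1 - γ) with hc
  have hc0 : ∀ t, 0 ≤ c t := fun t => by
    have := hα0 t; have := hα1 t; simp only [hc]; nlinarith
  have hd0 : ∀ t, 0 ≤ d t := fun t =>
    le_trans (abs_nonneg _)
      (le_trans (Finset.le_sup'
        (fun x : S × A × B => |q₁ t x.1 x.2.1 x.2.2 - q₁s x.1 x.2.1 x.2.2|)
        (Finset.mem_univ (Classical.arbitrary (S × A × B)))) (le_max_left _ _))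
  have hprod : ∀ n, d n ≤ d 0 * ∏ t ∈ Finset.range n, c t := by
    intro n
    induction n with
    | zero => simp
    | succ n ih =>
      calc d (n + 1) ≤ c n * d n := hcontr n
        _ ≤ c n * (d 0 * ∏ t ∈ Finset.range n, c t) :=
            mul_le_mul_of_nonneg_left ih (hc0 n)
        _ = d 0 * ∏ t ∈ Finset.range (n + 1), c t := by
            rw [Finset.prod_range_succ]; ring
  have hexp : ∀ n, ∏ t ∈ Finset.range n, c t ≤
      Real.exp (-(1 - γ) * ∑ t ∈ Finset.range n, α t) := by
    intro n
    calc ∏ t ∈ Finset.range n, c t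
        ≤ ∏ t ∈ Finset.range n, Real.exp (-(α t * (1 - γ))) := by
          refine Finset.prod_le_prod (fun t _ => hc0 t) (fun t _ => ?_)
          have := Real.add_one_le_exp (-(α t * (1 - γ)))
          simp only [hc]; linarith
      _ = Real.exp (∑ t ∈ Finset.range n, -(α t * (1 - γ))) := by
          rw [Real.exp_sum]
      _ = Real.exp (-(1 - γ) * ∑ t ∈ Finset.range n, α t) := by
          congr 1
          rw [Finset.mul_sum]
          exact Finset.sum_congr rfl (fun t _ => by ring)
  have hupper : ∀ n, d n ≤ d 0 * Real.exp (-(1 - γ) * ∑ t ∈ Finset.range n, α t) :=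
    fun n => le_trans (hprod n) (mul_le_mul_of_nonneg_left (hexp n) (hd0 0))
  have hlim : Tendsto (fun n => d 0 * Real.exp (-(1 - γ) * ∑ t ∈ Finset.range n, α t))
      atTop (nhds 0) := by
    rw [show (0:ℝ) = d 0 * 0 by ring]
    refine Tendsto.const_mul _ ?_
    refine Real.tendsto_exp_atBot.comp ?_
    have h1 : Tendsto (fun n => (1 - γ) * ∑ t ∈ Finset.range n, α t) atTop atTop :=
      hαdiv.const_mul_atTop (by linarith)
    have h2 := tendsto_neg_atTop_atBot.comp h1
    refine h2.congr (fun n => by simp [Function.comp]; ring)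
  exact tendsto_of_tendsto_of_tendsto_of_le_of_le tendsto_const_nhds hlim hd0 hupper
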